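/- arXiv:2403.03103 — 4 statements merged into one kernel-verified Lean document; each statement's English description precedes it below -/
import Mathlib

section
/- Consider a kernel K : X × X → ℝ that is G-invariant (K(ρ(g)x, ρ(g)x') = K(x, x')), training inputs x_1,…,x_n closed under the G-action via a permutation π_g (ρ(g)x_i = x_{π_g(i)}), training labels y ∈ ℝⁿ that are invariant (y_{π_g(i)} = y_i for all g, i), and an invertible Gram matrix Θ ∈ GL(n,ℝ) with Θ_{ij} = K(x_i, x_j). Define the predictor μ(x) = Σ_{i,j} K(x, x_i) [Θ⁻¹ (I − exp(−η t Θ))]_{ij} y_j. Then μ is G-invariant: μ(ρ(g)x) = μ(x) for all g ∈ G and x ∈ X. -/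
/-!
Fix `g`. Invariance of `K` and closure of the data make the permutation `π g` fix the Gram
matrix `Θ`, hence every matrix built from it by inversion, products and the exponential; so the
weight vector `Θ⁻¹ (1 - exp (-η t Θ)) y` is `π g`-invariant, and reindexing the sum over the
training points by `π g` absorbs the action of `ρ g` on the test input.
-/

namespace Matrix

open NormedSpace

variable {m n R : Type*} [Fintype m] [Fintype n]

theorem exp_submatrix_equiv [DecidableEq m] [DecidableEq n] [Ring R] [TopologicalSpace R]
    [IsTopologicalRing R] [T2Space R] [Algebra ℚ R] (e : n ≃ m) (A : Matrix m m R) :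
    exp (A.submatrix e e) = (exp A).submatrix e e := by
  let f := reindexAlgEquiv ℚ R e.symm
  have hf : ∀ B, f B = B.submatrix e e := fun _ => rfl
  have map_tsum := Function.LeftInverse.map_tsum (L := SummationFilter.unconditional ℕ) (g := f)
    (fun k => (k.factorial : ℚ)⁻¹ • A ^ k) (continuous_id.matrix_submatrix _ _)
    (continuous_id.matrix_submatrix _ _) f.symm_apply_apply
  simp only [map_smul, map_pow] at map_tsum
  simp only [exp_eq_tsum_rat, ← hf, map_tsum]

theorem submatrix_inv_mul_one_sub_exp_smul_of_submatrix_eq [DecidableEq m] [CommRing R]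
    [TopologicalSpace R] [IsTopologicalRing R] [T2Space R] [Algebra ℚ R] {σ : Equiv.Perm m}
    {A : Matrix m m R} (hA : A.submatrix σ σ = A) (c : R) :
    (A⁻¹ * (1 - exp (c • A))).submatrix σ σ = A⁻¹ * (1 - exp (c • A)) := by
  rw [← submatrix_mul_equiv _ _ _ σ, submatrix_sub, Pi.sub_apply, Pi.sub_apply,
    submatrix_one_equiv, ← exp_submatrix_equiv, submatrix_smul, Pi.smul_apply, Pi.smul_apply,
    ← inv_submatrix_equiv, hA]

theorem mulVec_comp_equiv_of_submatrix_eq [NonUnitalNonAssocSemiring R] {σ : Equiv.Perm m}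
    {M : Matrix m m R} (hM : M.submatrix σ σ = M) {v : m → R} (hv : v ∘ σ = v) :
    (M *ᵥ v) ∘ σ = M *ᵥ v := by
  conv_rhs => rw [← hM, ← hv, submatrix_mulVec_equiv]
  simp [Function.comp_assoc]

end Matrix

section KernelInvariance

variable {X ι R : Type*} {K : X → X → R} {T : X → X} {xs : ι → X} {σ : Equiv.Perm ι}

theorem gram_submatrix_eq_of_kernel_invariant (hK : ∀ x x', K (T x) (T x') = K x x')
    (hxs : ∀ i, T (xs i) = xs (σ i)) :
    (Matrix.of fun i j => K (xs i) (xs j)).submatrix σ σ = Matrix.of fun i j => K (xs i) (xs j) := by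
  ext i j
  simp [← hxs, hK]

theorem sum_kernel_mul_eq_of_kernel_invariant [Fintype ι] [NonUnitalNonAssocSemiring R]
    (hK : ∀ x x', K (T x) (T x') = K x x') (hxs : ∀ i, T (xs i) = xs (σ i)) {w : ι → R}
    (hw : w ∘ σ = w) (x : X) :
    ∑ i, K (T x) (xs i) * w i = ∑ i, K x (xs i) * w i := by
  rw [← Equiv.sum_comp σ]
  simp only [← hxs, hK, ← Function.comp_apply (f := w), hw]

end KernelInvariance

open NormedSpace in
theorem ntk_mean_invariant_general
    {G X : Type*} [Group G] [AddCommGroup X] [Module ℝ X]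
    (ρ : G →* (X ≃ₗ[ℝ] X)) (K : X → X → ℝ)
    (hK : ∀ (g : G) (x x' : X), K (ρ g x) (ρ g x') = K x x')
    {n : ℕ} (xs : Fin n → X) (π : G → Equiv.Perm (Fin n))
    (hxs : ∀ (g : G) (i : Fin n), ρ g (xs i) = xs (π g i))
    (y : Fin n → ℝ) (hy : ∀ (g : G) (i : Fin n), y (π g i) = y i)
    (Θ : Matrix (Fin n) (Fin n) ℝ) (hΘ : Θ = Matrix.of fun i j => K (xs i) (xs j))
    (η t : ℝ)
    (μ : X → ℝ)
    (hμ : μ = fun x => ∑ i, ∑ j,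
      K x (xs i) * (Θ⁻¹ * (1 - exp ((-(η * t)) • Θ))) i j * y j) :
    ∀ (g : G) (x : X), μ (ρ g x) = μ x := by
  intro g x
  set M := Θ⁻¹ * (1 - exp ((-(η * t)) • Θ))
  have hΘ_inv : Θ.submatrix (π g) (π g) = Θ :=
    hΘ ▸ gram_submatrix_eq_of_kernel_invariant (hK g) (hxs g)
  have hM_inv : M.submatrix (π g) (π g) = M :=
    Matrix.submatrix_inv_mul_one_sub_exp_smul_of_submatrix_eq hΘ_inv _
  have hμ_mulVec : ∀ x, μ x = ∑ i, K x (xs i) * M.mulVec y i := by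
    simp [hμ, Matrix.mulVec, dotProduct, Finset.mul_sum, mul_assoc]
  rw [hμ_mulVec, hμ_mulVec, sum_kernel_mul_eq_of_kernel_invariant (hK g) (hxs g)
    (Matrix.mulVec_comp_equiv_of_submatrix_eq hM_inv (funext (hy g)))]

open NormedSpace in
/-- Emergent invariance of the NTK mean prediction (invariant-label case): with a
`G`-invariant kernel, training data closed under the group action, invariant labels and an
invertible Gram matrix, the predictor
`μ(x) = ∑ i j, K(x, x_i) [Θ⁻¹ (I - exp(-η t Θ))]_{ij} y_j` is `G`-invariant. -/
theorem ntk_mean_invariant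
    {G X : Type*} [Group G] [AddCommGroup X] [Module ℝ X]
    (ρ : G →* (X ≃ₗ[ℝ] X)) (K : X → X → ℝ)
    (hK : ∀ (g : G) (x x' : X), K (ρ g x) (ρ g x') = K x x')
    {n : ℕ} (xs : Fin n → X) (π : G → Equiv.Perm (Fin n))
    (hxs : ∀ (g : G) (i : Fin n), ρ g (xs i) = xs (π g i))
    (y : Fin n → ℝ) (hy : ∀ (g : G) (i : Fin n), y (π g i) = y i)
    (Θ : Matrix (Fin n) (Fin n) ℝ) (hΘ : Θ = Matrix.of fun i j => K (xs i) (xs j))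
    (hΘunit : IsUnit Θ.det) (η t : ℝ)
    (μ : X → ℝ)
    (hμ : μ = fun x => ∑ i, ∑ j,
      K x (xs i) * (Θ⁻¹ * (1 - exp ((-(η * t)) • Θ))) i j * y j) :
    ∀ (g : G) (x : X), μ (ρ g x) = μ x :=
  ntk_mean_invariant_general ρ K hK xs π hxs y hy Θ hΘ η t μ hμ
end

section
/- Under the same assumptions as above but with labels transformed by an orthogonal representation ρ_Y, i.e. training pairs (x_i, y_i) ∈ X × ℝ^k with ρ_X(g)x_i = x_{π_g(i)} and ρ_Y(g)y_i = y_{π_g(i)}, a G-invariant scalar kernel K, and predictor μ(x) = Σ_{i,j} K(x, x_i) [Θ⁻¹(I − exp(−η t Θ))]_{ij} y_j ∈ ℝ^k, the predictor is equivariant: μ(ρ_X(g)x) = ρ_Y(g) μ(x) for all g ∈ G, x ∈ X. -/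
/-!
Relabelling the training points by `π g` fixes the Gram matrix `Θ`, hence also every matrix
built from `Θ` by products, inverses and exponentials, in particular the coefficient matrix
`Θ⁻¹ (1 - exp (-η t Θ))`. Substituting `i ↦ π g i`, `j ↦ π g j` in the double sum defining
`μ (ρX g x)` then turns `K (ρX g x) (x_i)` into `K x (x_i)` and `y_j` into `ρY g y_j`, and
`ρY g` comes out of the sum by linearity.
-/

open NormedSpace Matrix

theorem Matrix.exp_submatrix_equiv_self {m n 𝔸 : Type*} [Fintype m] [DecidableEq m]
    [Fintype n] [DecidableEq n] [Ring 𝔸] [TopologicalSpace 𝔸] [IsTopologicalRing 𝔸]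
    [T2Space 𝔸] [Algebra ℚ 𝔸] (e : m ≃ n) (A : Matrix n n 𝔸) :
    exp (A.submatrix e e) = (exp A).submatrix e e := by
  let φ := reindexAlgEquiv ℚ 𝔸 e.symm
  have hφ : ∀ B, φ B = B.submatrix e e := fun _ => rfl
  have hφ_cont : Continuous φ := continuous_id.matrix_submatrix _ _
  have hφ_symm_cont : Continuous φ.symm := continuous_id.matrix_submatrix _ _
  simp only [← hφ, exp_eq_tsum_rat,
    Function.LeftInverse.map_tsum _ hφ_cont hφ_symm_cont φ.left_inv, map_smul, map_pow]

theorem Matrix.submatrix_inv_mul_one_sub_exp_smul {n R : Type*} [Fintype n] [DecidableEq n]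
    [CommRing R] [TopologicalSpace R] [IsTopologicalRing R] [T2Space R] [Algebra ℚ R]
    {A : Matrix n n R} {σ : Equiv.Perm n} (hA : A.submatrix σ σ = A) (c : R) :
    (A⁻¹ * (1 - exp (c • A))).submatrix σ σ = A⁻¹ * (1 - exp (c • A)) := by
  have h_smul : (c • A).submatrix σ σ = c • A.submatrix σ σ := rfl
  have h_one_sub : ∀ B : Matrix n n R, (1 - B).submatrix σ σ = 1 - B.submatrix σ σ := fun B => by
    change (1 : Matrix n n R).submatrix σ σ - _ = _
    rw [submatrix_one_equiv]
    rfl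
  calc (A⁻¹ * (1 - exp (c • A))).submatrix σ σ
      = (A.submatrix σ σ)⁻¹ * (1 - exp (c • A.submatrix σ σ)) := by
        rw [← submatrix_mul_equiv _ _ _ σ, inv_submatrix_equiv, h_one_sub, ← h_smul,
          exp_submatrix_equiv_self]
    _ = A⁻¹ * (1 - exp (c • A)) := by rw [hA]

theorem Matrix.submatrix_gram_eq_self {X ι R : Type*} {K : X → X → R} {xs : ι → X} {f : X → X}
    {σ : Equiv.Perm ι} (hK : ∀ x x', K (f x) (f x') = K x x') (hxs : ∀ i, f (xs i) = xs (σ i)) :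
    (Matrix.of fun i j => K (xs i) (xs j)).submatrix σ σ =
      Matrix.of fun i j => K (xs i) (xs j) := by
  ext i j
  simp only [submatrix_apply, of_apply, ← hxs, hK]

section KernelPredictor

variable {X ι R V : Type*} [Fintype ι] [CommSemiring R] [AddCommMonoid V] [Module R V]

def kernelPredictor (K : X → X → R) (xs : ι → X) (M : Matrix ι ι R) (ys : ι → V) (x : X) : V :=
  ∑ i, ∑ j, (K x (xs i) * M i j) • ys j

theorem kernelPredictor_apply_of_invariant {K : X → X → R} {xs : ι → X} {M : Matrix ι ι R}
    {ys : ι → V} {f : X → X} {σ : Equiv.Perm ι} {L : V →ₗ[R] V}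
    (hK : ∀ x x', K (f x) (f x') = K x x') (hxs : ∀ i, f (xs i) = xs (σ i))
    (hys : ∀ i, L (ys i) = ys (σ i)) (hM : M.submatrix σ σ = M) (x : X) :
    kernelPredictor K xs M ys (f x) = L (kernelPredictor K xs M ys x) := by
  have hMσ : ∀ i j, M (σ i) (σ j) = M i j := fun i j => congrFun (congrFun hM i) j
  simp only [kernelPredictor, map_sum, map_smul]
  rw [← Equiv.sum_comp σ]
  refine Finset.sum_congr rfl fun i _ => ?_
  rw [← Equiv.sum_comp σ]
  refine Finset.sum_congr rfl fun j _ => ?_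
  rw [← hxs, hK, hMσ, hys]

end KernelPredictor

open NormedSpace Matrix in
theorem ntk_mean_equivariant_general
    {G X : Type*} [Group G] [AddCommGroup X] [Module ℝ X]
    (ρX : G →* (X ≃ₗ[ℝ] X)) {k : ℕ}
    (ρY : G →* Matrix (Fin k) (Fin k) ℝ)
    (K : X → X → ℝ)
    (hK : ∀ (g : G) (x x' : X), K (ρX g x) (ρX g x') = K x x')
    {n : ℕ} (xs : Fin n → X) (ys : Fin n → (Fin k → ℝ))
    (π : G → Equiv.Perm (Fin n))
    (hxs : ∀ (g : G) (i : Fin n), ρX g (xs i) = xs (π g i))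
    (hys : ∀ (g : G) (i : Fin n), (ρY g).mulVec (ys i) = ys (π g i))
    (Θ : Matrix (Fin n) (Fin n) ℝ) (hΘ : Θ = Matrix.of fun i j => K (xs i) (xs j))
    (η t : ℝ)
    (μ : X → (Fin k → ℝ))
    (hμ : μ = fun x a => ∑ i, ∑ j,
      K x (xs i) * (Θ⁻¹ * (1 - exp ((-(η * t)) • Θ))) i j * ys j a) :
    ∀ (g : G) (x : X), μ (ρX g x) = (ρY g).mulVec (μ x) := by
  intro g x
  have hΘg : Θ.submatrix (π g) (π g) = Θ := hΘ ▸ submatrix_gram_eq_self (hK g) (hxs g)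
  have hμ_pred : μ = kernelPredictor K xs (Θ⁻¹ * (1 - exp ((-(η * t)) • Θ))) ys := by
    funext x a
    simp only [hμ, kernelPredictor, Finset.sum_apply, Pi.smul_apply, smul_eq_mul]
  rw [hμ_pred]
  exact kernelPredictor_apply_of_invariant (f := ρX g) (L := (ρY g).mulVecLin) (hK g) (hxs g)
    (hys g) (submatrix_inv_mul_one_sub_exp_smul hΘg _) x

open NormedSpace Matrix in
/-- Emergent equivariance of the NTK mean prediction: with labels in `ℝ^k` transforming
under an orthogonal representation `ρY` and a `G`-invariant scalar kernel acting scalarly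
on the label channels, the predictor
`μ(x) = ∑ i j, K(x, x_i) [Θ⁻¹ (I - exp(-η t Θ))]_{ij} y_j ∈ ℝ^k` is `G`-equivariant:
`μ(ρX(g) x) = ρY(g) μ(x)`. -/
theorem ntk_mean_equivariant
    {G X : Type*} [Group G] [AddCommGroup X] [Module ℝ X]
    (ρX : G →* (X ≃ₗ[ℝ] X)) {k : ℕ}
    (ρY : G →* Matrix (Fin k) (Fin k) ℝ)
    (hρYorth : ∀ g : G, (ρY g)ᵀ * ρY g = 1)
    (K : X → X → ℝ)
    (hK : ∀ (g : G) (x x' : X), K (ρX g x) (ρX g x') = K x x')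
    {n : ℕ} (xs : Fin n → X) (ys : Fin n → (Fin k → ℝ))
    (π : G → Equiv.Perm (Fin n))
    (hxs : ∀ (g : G) (i : Fin n), ρX g (xs i) = xs (π g i))
    (hys : ∀ (g : G) (i : Fin n), (ρY g).mulVec (ys i) = ys (π g i))
    (Θ : Matrix (Fin n) (Fin n) ℝ) (hΘ : Θ = Matrix.of fun i j => K (xs i) (xs j))
    (hΘunit : IsUnit Θ.det) (η t : ℝ)
    (μ : X → (Fin k → ℝ))
    (hμ : μ = fun x a => ∑ i, ∑ j,
      K x (xs i) * (Θ⁻¹ * (1 - exp ((-(η * t)) • Θ))) i j * ys j a) :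
    ∀ (g : G) (x : X), μ (ρX g x) = (ρY g).mulVec (μ x) :=
  ntk_mean_equivariant_general ρX ρY K hK xs ys π hxs hys Θ hΘ η t μ hμ
end

section
/- Let K : X × X → ℝ be a G-invariant symmetric kernel, training inputs closed under the G-action via permutation π_g with permutation matrix Π(g), Gram matrices Θ and 𝒦 (of two G-invariant kernels) both commuting with Π(g), Θ invertible. Define, for reals η, t, T = I − exp(−ηΘt) and Σ-terms Σ¹(x,x') = Σ_{ij} Θ(x,x_i)[Θ⁻¹ T 𝒦 T Θ⁻¹]_{ij} Θ(x_j,x'), where Θ(x, x_i) is the kernel evaluation. Then Σ¹ is G-invariant: Σ¹(ρ(g)x, ρ(g)x') = Σ¹(x, x'). -/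
/-! Each permutation matrix `Π(g)` commutes with `Θ`, hence with `Θ⁻¹` and `exp(-ηtΘ)`, and with
`𝒦`, so the middle matrix `M = Θ⁻¹ T 𝒦 T Θ⁻¹` satisfies `M_{π_g i, π_g j} = M_{ij}`. Invariance of
`Θ` and `ρ(g) x_i = x_{π_g i}` give `Θ(ρ(g)x, x_{π_g i}) = Θ(x, x_i)`, so reindexing the double
sum by `π_g` turns `Σ¹(ρ(g)x, ρ(g)x')` into `Σ¹(x, x')`. -/

namespace Matrix

variable {n R : Type*} [Fintype n]

-- For singular `B` this holds because `B⁻¹ = 0`.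
theorem commute_nonsing_inv_right [DecidableEq n] [CommRing R] {A B : Matrix n n R}
    (h : Commute A B) : Commute A B⁻¹ := by
  by_cases hB : IsUnit B.det
  · obtain ⟨u, rfl⟩ := (isUnit_iff_isUnit_det B).mpr hB
    rw [← coe_units_inv]
    exact h.units_inv_right
  · rw [nonsing_inv_apply_not_isUnit B hB]
    exact Commute.zero_right A

theorem submatrix_self_eq_of_commute_permMatrix [DecidableEq n] [NonAssocSemiring R]
    {σ : Equiv.Perm n} {M : Matrix n n R} (h : Commute (σ.permMatrix R) M) :
    M.submatrix σ σ = M := by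
  have hrows : M.submatrix σ id = M.submatrix id σ.symm := by
    rw [← PEquiv.toMatrix_toPEquiv_mul, ← PEquiv.mul_toMatrix_toPEquiv]
    exact h.eq
  ext i j
  simpa using congrFun (congrFun hrows i) (σ j)

theorem sum_sum_mul_comp_perm_of_submatrix_self_eq [NonUnitalNonAssocSemiring R]
    {σ : Equiv.Perm n} {M : Matrix n n R} (hM : M.submatrix σ σ = M) (u v : n → R) :
    ∑ i, ∑ j, u (σ i) * M i j * v (σ j) = ∑ i, ∑ j, u i * M i j * v j := by
  have hentry : ∀ i j, M (σ i) (σ j) = M i j := fun i j => congrFun₂ hM i j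
  calc ∑ i, ∑ j, u (σ i) * M i j * v (σ j)
      = ∑ i, ∑ j, u (σ i) * M (σ i) (σ j) * v (σ j) := by simp only [hentry]
    _ = ∑ i, ∑ j, u i * M i j * v j := by
        rw [← Equiv.sum_comp σ (fun i => ∑ j, u i * M i j * v j)]
        exact Fintype.sum_congr _ _ fun i =>
          Equiv.sum_comp σ (fun j => u (σ i) * M (σ i) j * v j)

end Matrix

open Matrix

open NormedSpace in
theorem covariance_term_invariant_general
    {G X : Type*} [Group G] [AddCommGroup X] [Module ℝ X]
    (ρ : G →* (X ≃ₗ[ℝ] X))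
    (Θk : X → X → ℝ)
    (hΘinv : ∀ (g : G) (x x' : X), Θk (ρ g x) (ρ g x') = Θk x x')
    {n : ℕ} (xs : Fin n → X) (π : G → Equiv.Perm (Fin n))
    (hxs : ∀ (g : G) (i : Fin n), ρ g (xs i) = xs (π g i))
    (ΘM KM : Matrix (Fin n) (Fin n) ℝ)
    (P : G → Matrix (Fin n) (Fin n) ℝ)
    (hPdef : ∀ g, P g = Matrix.of fun i j => if j = π g i then (1 : ℝ) else 0)
    (hPΘ : ∀ g, P g * ΘM = ΘM * P g) (hPK : ∀ g, P g * KM = KM * P g)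
    (η t : ℝ)
    (T : Matrix (Fin n) (Fin n) ℝ) (hT : T = 1 - exp ((-(η * t)) • ΘM))
    (Sig1 : X → X → ℝ)
    (hSig1 : Sig1 = fun x x' => ∑ i, ∑ j,
      Θk x (xs i) * (ΘM⁻¹ * T * KM * T * ΘM⁻¹) i j * Θk (xs j) x') :
    ∀ (g : G) (x x' : X), Sig1 (ρ g x) (ρ g x') = Sig1 x x' := by
  intro g x x'
  have hP : P g = (π g).permMatrix ℝ := by
    ext i j
    simp [hPdef, PEquiv.toMatrix_apply, eq_comm]
  have hΘcomm : Commute (P g) ΘM := hPΘ g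
  have hTcomm : Commute (P g) T := by
    rw [hT]
    exact (Commute.one_right _).sub_right (hΘcomm.smul_right _).exp_right
  have hΘinvComm := commute_nonsing_inv_right hΘcomm
  have hMcomm : Commute ((π g).permMatrix ℝ) (ΘM⁻¹ * T * KM * T * ΘM⁻¹) := by
    rw [← hP]
    exact (((hΘinvComm.mul_right hTcomm).mul_right (hPK g)).mul_right hTcomm).mul_right hΘinvComm
  have hleft : ∀ i, Θk (ρ g x) (xs (π g i)) = Θk x (xs i) := fun i => by
    rw [← hxs, hΘinv]
  have hright : ∀ j, Θk (xs (π g j)) (ρ g x') = Θk (xs j) x' := fun j => by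
    rw [← hxs, hΘinv]
  subst hSig1
  simpa only [hleft, hright] using (sum_sum_mul_comp_perm_of_submatrix_self_eq
    (submatrix_self_eq_of_commute_permMatrix hMcomm) (fun i => Θk (ρ g x) (xs i))
    (fun j => Θk (xs j) (ρ g x'))).symm

open NormedSpace in
/-- Invariance of the ensemble covariance term `Σ¹`: with two `G`-invariant symmetric
kernels `Θk`, `Kk`, training inputs closed under the group action, both Gram matrices
commuting with the permutation matrices, and the Gram matrix of `Θk` invertible,
`Σ¹(x,x') = ∑ i j, Θk(x,x_i) [Θ⁻¹ T 𝒦 T Θ⁻¹]_{ij} Θk(x_j,x')` with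
`T = I - exp(-ηΘt)` is `G`-invariant. -/
theorem covariance_term_invariant
    {G X : Type*} [Group G] [AddCommGroup X] [Module ℝ X]
    (ρ : G →* (X ≃ₗ[ℝ] X))
    (Θk Kk : X → X → ℝ)
    (hΘsymm : ∀ x x', Θk x x' = Θk x' x) (hKsymm : ∀ x x', Kk x x' = Kk x' x)
    (hΘinv : ∀ (g : G) (x x' : X), Θk (ρ g x) (ρ g x') = Θk x x')
    (hKinv : ∀ (g : G) (x x' : X), Kk (ρ g x) (ρ g x') = Kk x x')
    {n : ℕ} (xs : Fin n → X) (π : G → Equiv.Perm (Fin n))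
    (hxs : ∀ (g : G) (i : Fin n), ρ g (xs i) = xs (π g i))
    (ΘM KM : Matrix (Fin n) (Fin n) ℝ)
    (hΘM : ΘM = Matrix.of fun i j => Θk (xs i) (xs j))
    (hKM : KM = Matrix.of fun i j => Kk (xs i) (xs j))
    (hΘMunit : IsUnit ΘM.det)
    (P : G → Matrix (Fin n) (Fin n) ℝ)
    (hPdef : ∀ g, P g = Matrix.of fun i j => if j = π g i then (1 : ℝ) else 0)
    (hPΘ : ∀ g, P g * ΘM = ΘM * P g) (hPK : ∀ g, P g * KM = KM * P g)
    (η t : ℝ)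
    (T : Matrix (Fin n) (Fin n) ℝ) (hT : T = 1 - exp ((-(η * t)) • ΘM))
    (Sig1 : X → X → ℝ)
    (hSig1 : Sig1 = fun x x' => ∑ i, ∑ j,
      Θk x (xs i) * (ΘM⁻¹ * T * KM * T * ΘM⁻¹) i j * Θk (xs j) x') :
    ∀ (g : G) (x x' : X), Sig1 (ρ g x) (ρ g x') = Sig1 x x' :=
  covariance_term_invariant_general ρ Θk hΘinv xs π hxs ΘM KM P hPdef hPΘ hPK η t T hT Sig1 hSig1
end

section
/- Let Θ be an n×n invertible real matrix, Π a permutation matrix with Π Θ = Θ Π, y ∈ ℝⁿ, and suppose Π y = λ y for λ ∈ {+1, −1} (labels in a one-dimensional sign representation). Define μ(x) = v(x)ᵀ Θ⁻¹ (I − exp(−ηΘt)) y for a feature map v : X → ℝⁿ satisfying v(ρ(g)x) = Πᵀ v(x). Then μ(ρ(g)x) = λ μ(x). -/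
/-! `Π` commutes with `Θ`, hence with `Θ⁻¹ (1 - exp (-ηtΘ))`, so this matrix maps the
`λ`-eigenvector `y` of `Π` to another one; moving `Πᵀ` across the dot product then yields `λ`. -/

namespace Matrix

open NormedSpace

variable {m : Type*} [Fintype m]

theorem transpose_mulVec_dotProduct_of_mulVec_eq_smul {R : Type*} [CommSemiring R]
    {P : Matrix m m R} {w : m → R} {c : R} (hw : P *ᵥ w = c • w) (v : m → R) :
    Pᵀ *ᵥ v ⬝ᵥ w = c * (v ⬝ᵥ w) := by
  rw [mulVec_transpose, ← dotProduct_mulVec, hw, dotProduct_smul, smul_eq_mul]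

theorem mulVec_mulVec_eq_smul_of_commute {R : Type*} [CommSemiring R]
    {P M : Matrix m m R} (hPM : Commute P M) {y : m → R} {c : R} (hy : P *ᵥ y = c • y) :
    P *ᵥ (M *ᵥ y) = c • (M *ᵥ y) := by
  rw [mulVec_mulVec, hPM.eq, ← mulVec_mulVec, hy, mulVec_smul]

theorem commute_inv_mul_one_sub_exp [DecidableEq m] {𝕜 : Type*} [RCLike 𝕜]
    {P Θ : Matrix m m 𝕜} (h : Commute P Θ) (s : 𝕜) :
    Commute P (Θ⁻¹ * (1 - exp (s • Θ))) := by
  have hinv : Commute P Θ⁻¹ := by simpa using Commute.zpow_right h (-1)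
  exact hinv.mul_right ((Commute.one_right P).sub_right (h.smul_right s).exp_right)

end Matrix

open NormedSpace Matrix in
theorem sign_representation_equivariance_general
    {X : Type*} {n : ℕ}
    (Θ : Matrix (Fin n) (Fin n) ℝ)
    (P : Matrix (Fin n) (Fin n) ℝ)
    (hcomm : P * Θ = Θ * P)
    (y : Fin n → ℝ) (lam : ℝ)
    (hy : P.mulVec y = lam • y)
    (v : X → (Fin n → ℝ)) (T : X → X)
    (hv : ∀ x, v (T x) = Pᵀ.mulVec (v x))
    (η t : ℝ) (μ : X → ℝ)
    (hμ : μ = fun x => v x ⬝ᵥ (Θ⁻¹ * (1 - exp ((-(η * t)) • Θ))).mulVec y) :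
    ∀ x, μ (T x) = lam * μ x := by
  intro x
  subst hμ
  beta_reduce
  rw [hv]
  exact transpose_mulVec_dotProduct_of_mulVec_eq_smul
    (mulVec_mulVec_eq_smul_of_commute (commute_inv_mul_one_sub_exp hcomm _) hy) _

open NormedSpace Matrix in
/-- Emergent equivariance for one-dimensional sign representations: if `Θ` is invertible
and commutes with a permutation matrix `Π`, the labels satisfy `Π y = λ y` with
`λ ∈ {+1, -1}`, and the feature map `v` satisfies `v(ρ(g) x) = Πᵀ v(x)`, then the
predictor `μ(x) = v(x)ᵀ Θ⁻¹ (I - exp(-ηΘt)) y` satisfies `μ(ρ(g) x) = λ μ(x)`. -/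
theorem sign_representation_equivariance
    {X : Type*} {n : ℕ}
    (Θ : Matrix (Fin n) (Fin n) ℝ) (hΘ : IsUnit Θ.det)
    (π : Equiv.Perm (Fin n))
    (P : Matrix (Fin n) (Fin n) ℝ)
    (hP : P = Matrix.of fun i j => if j = π i then (1 : ℝ) else 0)
    (hcomm : P * Θ = Θ * P)
    (y : Fin n → ℝ) (lam : ℝ) (hlam : lam = 1 ∨ lam = -1)
    (hy : P.mulVec y = lam • y)
    (v : X → (Fin n → ℝ)) (T : X → X)
    (hv : ∀ x, v (T x) = Pᵀ.mulVec (v x))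
    (η t : ℝ) (μ : X → ℝ)
    (hμ : μ = fun x => v x ⬝ᵥ (Θ⁻¹ * (1 - exp ((-(η * t)) • Θ))).mulVec y) :
    ∀ x, μ (T x) = lam * μ x :=
  sign_representation_equivariance_general Θ P hcomm y lam hy v T hv η t μ hμ
end
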